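/- Fix η > 0 and 0 < ξ, set 𝒱 = 𝒱^N(T) ≥ 1, Q = sup_{s∈[0,T]} Q^N(R^N(s),s) and Δ₁ = 1/(4C₇ 𝒱^{4/3+η} Q^{1/3}), where C₇ is such that |E^N(x,s)| ≤ C₇ 𝒱^{4/3} Q^{1/3} for all x and s ∈ [0,T]. Let (X,V) be a characteristic of the partial dynamics, write V_r = (V₂,V₃) for the component of the velocity transverse to the cylinder axis, and let t ∈ [0,T] with t + Δ₁ ≤ T. Then: (a) if |V_r(t)| ≤ 𝒱^ξ, then sup_{s∈[t,t+Δ₁]} |V_r(s)| ≤ 2𝒱^ξ; (b) if |V_r(t)| ≥ 𝒱^ξ, then inf_{s∈[t,t+Δ₁]} |V_r(s)| ≥ ½𝒱^ξ. -/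

import Mathlib

noncomputable section
open MeasureTheory Real Set

/-- Three-dimensional Euclidean space. -/
abbrev E3 : Type := EuclideanSpace ℝ (Fin 3)

/-- The cross product on `ℝ³`. -/
def cross3 (a b : E3) : E3 :=
  WithLp.toLp 2 ![a 1 * b 2 - a 2 * b 1, a 2 * b 0 - a 0 * b 2, a 0 * b 1 - a 1 * b 0]

/-- The open cylinder of radius `A` about the `x₁`-axis. -/
def cyl (A : ℝ) : Set E3 := {x : E3 | x 1 ^ 2 + x 2 ^ 2 < A ^ 2}

/-- The external magnetic field `B(x) = ((A² - (x₂²+x₃²))^{-θ}, 0, 0)`. -/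
def Bf (A θ : ℝ) (x : E3) : E3 := WithLp.toLp 2 ![(A ^ 2 - (x 1 ^ 2 + x 2 ^ 2)) ^ (-θ), 0, 0]

/-- A solution of the partial dynamics with velocity cutoff `N` on the time interval `[0,T]`:
characteristics `(X,V)`, phase-space density `f`, spatial density `ρ` and self-consistent
electric field `EE`, with `f` transported along the measure-preserving characteristic flow
from the truncated initial datum `f₀ · 1_{b(N)}`. -/
structure PD (A Abar θ T : ℝ) (f₀ : E3 → E3 → ℝ) (N : ℕ) where
  X : E3 → E3 → ℝ → E3
  V : E3 → E3 → ℝ → E3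
  f : E3 → E3 → ℝ → ℝ
  ρ : E3 → ℝ → ℝ
  EE : E3 → ℝ → E3
  init_X : ∀ x v, X x v 0 = x
  init_V : ∀ x v, V x v 0 = v
  ode_X : ∀ x v, x ∈ cyl Abar → ‖v‖ < N → ∀ t ∈ Icc (0:ℝ) T,
    HasDerivAt (X x v) (V x v t) t
  ode_V : ∀ x v, x ∈ cyl Abar → ‖v‖ < N → ∀ t ∈ Icc (0:ℝ) T,
    HasDerivAt (V x v) (EE (X x v t) t + cross3 (V x v t) (Bf A θ (X x v t))) t
  f_init : ∀ x v, f x v 0 = if ‖v‖ < N then f₀ x v else 0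
  f_flow : ∀ x v, ∀ t ∈ Icc (0:ℝ) T, f (X x v t) (V x v t) t = f x v 0
  flow_mp : ∀ t ∈ Icc (0:ℝ) T,
    MeasurePreserving (fun p : E3 × E3 => (X p.1 p.2 t, V p.1 p.2 t)) volume volume
  flow_bij : ∀ t ∈ Icc (0:ℝ) T,
    Function.Bijective (fun p : E3 × E3 => (X p.1 p.2 t, V p.1 p.2 t))
  rho_def : ∀ x t, ρ x t = ∫ v : E3, f x v t
  E_def : ∀ x t, EE x t = ∫ y : E3, (ρ y t / ‖x - y‖ ^ 3) • (x - y)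

/-- The maximal velocity `𝒱^N(t) = max{C₄, sup_{s≤t} sup_{(x,v)∈D₀×b(N)} |V^N(s)|}`. -/
def maxV {A Abar θ T : ℝ} {f₀ : E3 → E3 → ℝ} {N : ℕ} (P : PD A Abar θ T f₀ N)
    (C₄ t : ℝ) : ℝ :=
  max C₄ (sSup {r : ℝ | ∃ s ∈ Icc (0:ℝ) t, ∃ x ∈ cyl Abar, ∃ v : E3,
    ‖v‖ < (N : ℝ) ∧ r = ‖P.V x v s‖})

/-- The maximal displacement `R^N(t) = 1 + ∫₀ᵗ 𝒱^N(s) ds`. -/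
def Rdisp {A Abar θ T : ℝ} {f₀ : E3 → E3 → ℝ} {N : ℕ} (P : PD A Abar θ T f₀ N)
    (C₄ t : ℝ) : ℝ :=
  1 + ∫ s in (0:ℝ)..t, maxV P C₄ s

/-- The local energy `W^N(μ,R,t)` associated to the mollifier `φ`. -/
def Wloc {A Abar θ T : ℝ} {f₀ : E3 → E3 → ℝ} {N : ℕ} (P : PD A Abar θ T f₀ N)
    (φ : ℝ → ℝ) (μ R t : ℝ) : ℝ :=
  (1/2) * (∫ x : E3, φ (|x 0 - μ| / R) * ∫ v : E3, ‖v‖ ^ 2 * P.f x v t)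
  + (1/2) * (∫ x : E3, φ (|x 0 - μ| / R) * P.ρ x t * ∫ y : E3, P.ρ y t / ‖x - y‖)

/-- `Q^N(R,t) = max{1, sup_μ W^N(μ,R,t)}`. -/
def Qloc {A Abar θ T : ℝ} {f₀ : E3 → E3 → ℝ} {N : ℕ} (P : PD A Abar θ T f₀ N)
    (φ : ℝ → ℝ) (R t : ℝ) : ℝ :=
  max 1 (⨆ μ : ℝ, Wloc P φ μ R t)


lemma sqrt_eps_le (ε u : ℝ) (hε : 0 ≤ ε) (hu : 0 ≤ u) :
    Real.sqrt (ε ^ 2 + u) ≤ ε + Real.sqrt u := by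
  rw [show ε + Real.sqrt u = Real.sqrt ((ε + Real.sqrt u) ^ 2) from
    (Real.sqrt_sq (by positivity)).symm]
  apply Real.sqrt_le_sqrt
  nlinarith [Real.sq_sqrt hu, Real.sqrt_nonneg u]

lemma aux_perp (t Δ C : ℝ) (hC : 0 ≤ C)
    (V1 V2 E1 E2 h : ℝ → ℝ)
    (hd1 : ∀ s ∈ Icc t (t + Δ), HasDerivAt V1 (E1 s + V2 s * h s) s)
    (hd2 : ∀ s ∈ Icc t (t + Δ), HasDerivAt V2 (E2 s - V1 s * h s) s)
    (hEb : ∀ s ∈ Icc t (t + Δ), Real.sqrt (E1 s ^ 2 + E2 s ^ 2) ≤ C) :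
    ∀ s ∈ Icc t (t + Δ),
      |Real.sqrt (V1 s ^ 2 + V2 s ^ 2) - Real.sqrt (V1 t ^ 2 + V2 t ^ 2)| ≤ C * Δ := by
  intro s hs
  have hΔ0 : 0 ≤ Δ := by
    by_contra hneg
    exact absurd (hs.1.trans hs.2) (by push_neg at hneg ⊢; linarith)
  have htmem : t ∈ Icc t (t + Δ) := ⟨le_refl t, by linarith⟩
  have key : ∀ ε : ℝ, 0 < ε →
      |Real.sqrt (ε ^ 2 + (V1 s ^ 2 + V2 s ^ 2)) - Real.sqrt (ε ^ 2 + (V1 t ^ 2 + V2 t ^ 2))|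
        ≤ C * Δ := by
    intro ε hε
    set w : ℝ → ℝ := fun u => Real.sqrt (ε ^ 2 + (V1 u ^ 2 + V2 u ^ 2)) with hw_def
    set w' : ℝ → ℝ := fun u =>
      (2 * V1 u ^ 1 * (E1 u + V2 u * h u) + 2 * V2 u ^ 1 * (E2 u - V1 u * h u)) /
        (2 * Real.sqrt (ε ^ 2 + (V1 u ^ 2 + V2 u ^ 2))) with hw'_def
    have hpos : ∀ u : ℝ, 0 < ε ^ 2 + (V1 u ^ 2 + V2 u ^ 2) := fun u => by positivity
    have hw : ∀ u ∈ Icc t (t + Δ), HasDerivAt w (w' u) u := by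
      intro u hu
      have hin : HasDerivAt (fun y => ε ^ 2 + (V1 y ^ 2 + V2 y ^ 2))
          (2 * V1 u ^ 1 * (E1 u + V2 u * h u) + 2 * V2 u ^ 1 * (E2 u - V1 u * h u)) u := by
        have := (hasDerivAt_const u (ε ^ 2)).add
          (((hd1 u hu).pow 2).add ((hd2 u hu).pow 2))
        exact this.congr_deriv (by norm_num)
      simpa [hw'_def] using hin.sqrt (ne_of_gt (hpos u))
    have hbound : ∀ u ∈ Icc t (t + Δ), ‖w' u‖ ≤ C := by
      intro u hu
      have hsq := hpos u
      have hs1 : 0 < Real.sqrt (ε ^ 2 + (V1 u ^ 2 + V2 u ^ 2)) := Real.sqrt_pos.2 hsq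
      have hnum : |V1 u * E1 u + V2 u * E2 u| ≤
          Real.sqrt (V1 u ^ 2 + V2 u ^ 2) * Real.sqrt (E1 u ^ 2 + E2 u ^ 2) := by
        have h2 : (V1 u * E1 u + V2 u * E2 u) ^ 2 ≤
            (Real.sqrt (V1 u ^ 2 + V2 u ^ 2) * Real.sqrt (E1 u ^ 2 + E2 u ^ 2)) ^ 2 := by
          rw [mul_pow, Real.sq_sqrt (by positivity), Real.sq_sqrt (by positivity)]
          nlinarith [sq_nonneg (V1 u * E2 u - V2 u * E1 u)]
        calc |V1 u * E1 u + V2 u * E2 u| = Real.sqrt ((V1 u * E1 u + V2 u * E2 u) ^ 2) := by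
              rw [Real.sqrt_sq_eq_abs]
          _ ≤ _ := by
              rw [show Real.sqrt (V1 u ^2+V2 u ^2) * Real.sqrt (E1 u ^2 + E2 u ^2)
                = Real.sqrt ((Real.sqrt (V1 u ^2+V2 u ^2) * Real.sqrt (E1 u ^2+E2 u ^2))^2) from
                (Real.sqrt_sq (by positivity)).symm]
              exact Real.sqrt_le_sqrt h2
      have hVle : Real.sqrt (V1 u ^ 2 + V2 u ^ 2) ≤
          Real.sqrt (ε ^ 2 + (V1 u ^ 2 + V2 u ^ 2)) :=
        Real.sqrt_le_sqrt (by nlinarith)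
      have hEC := hEb u hu
      have hEnn : 0 ≤ Real.sqrt (E1 u ^ 2 + E2 u ^ 2) := Real.sqrt_nonneg _
      have : ‖w' u‖ = |V1 u * E1 u + V2 u * E2 u| /
          Real.sqrt (ε ^ 2 + (V1 u ^ 2 + V2 u ^ 2)) := by
        rw [hw'_def]
        simp only [Real.norm_eq_abs]
        rw [show (2 * V1 u ^ 1 * (E1 u + V2 u * h u) + 2 * V2 u ^ 1 * (E2 u - V1 u * h u))
          = 2 * (V1 u * E1 u + V2 u * E2 u) by ring]
        rw [abs_div]
        rw [abs_of_pos (by positivity : (0:ℝ) < 2 * Real.sqrt (ε ^ 2 + (V1 u ^ 2 + V2 u ^ 2)))]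
        rw [abs_mul, abs_of_pos (by norm_num : (0:ℝ) < 2)]
        field_simp
      rw [this, div_le_iff₀ hs1]
      calc |V1 u * E1 u + V2 u * E2 u| ≤
          Real.sqrt (V1 u ^ 2 + V2 u ^ 2) * Real.sqrt (E1 u ^ 2 + E2 u ^ 2) := hnum
        _ ≤ Real.sqrt (ε ^ 2 + (V1 u ^ 2 + V2 u ^ 2)) * C := by
            have := mul_le_mul hVle hEC hEnn (Real.sqrt_nonneg _)
            linarith
        _ = C * Real.sqrt (ε ^ 2 + (V1 u ^ 2 + V2 u ^ 2)) := mul_comm _ _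
    have hmv := Convex.norm_image_sub_le_of_norm_hasDerivWithin_le
      (fun u hu => (hw u hu).hasDerivWithinAt) hbound (convex_Icc _ _) htmem hs
    rw [Real.norm_eq_abs, Real.norm_eq_abs] at hmv
    have : |s - t| = s - t := abs_of_nonneg (by linarith [hs.1])
    rw [this] at hmv
    calc |w s - w t| ≤ C * (s - t) := hmv
      _ ≤ C * Δ := by nlinarith [hs.2]
  -- pass to the limit ε → 0
  have habs : ∀ ε : ℝ, 0 < ε →
      |Real.sqrt (V1 s ^ 2 + V2 s ^ 2) - Real.sqrt (V1 t ^ 2 + V2 t ^ 2)| ≤ C * Δ + ε := by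
    intro ε hε
    have hk := key ε hε
    have h1 : Real.sqrt (V1 s ^ 2 + V2 s ^ 2) ≤ Real.sqrt (ε ^ 2 + (V1 s ^ 2 + V2 s ^ 2)) :=
      Real.sqrt_le_sqrt (by nlinarith)
    have h2 : Real.sqrt (ε ^ 2 + (V1 s ^ 2 + V2 s ^ 2)) ≤ ε + Real.sqrt (V1 s ^ 2 + V2 s ^ 2) :=
      sqrt_eps_le ε _ hε.le (by positivity)
    have h3 : Real.sqrt (V1 t ^ 2 + V2 t ^ 2) ≤ Real.sqrt (ε ^ 2 + (V1 t ^ 2 + V2 t ^ 2)) :=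
      Real.sqrt_le_sqrt (by nlinarith)
    have h4 : Real.sqrt (ε ^ 2 + (V1 t ^ 2 + V2 t ^ 2)) ≤ ε + Real.sqrt (V1 t ^ 2 + V2 t ^ 2) :=
      sqrt_eps_le ε _ hε.le (by positivity)
    rw [abs_le] at hk ⊢
    constructor <;> [linarith [hk.1]; linarith [hk.2]]
  exact le_of_forall_pos_le_add habs

/-- Lemma 2 of the paper: on a time window of length `Δ₁ = 1/(4C₇𝒱^{4/3+η}Q^{1/3})`, the
transverse velocity `V_r = (V₂,V₃)` of a characteristic stays of order `𝒱^ξ`: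
if initially `≤ 𝒱^ξ` it stays `≤ 2𝒱^ξ`, and if initially `≥ 𝒱^ξ` it stays `≥ ½𝒱^ξ`. -/
theorem transverse_velocity_stability
    (A Abar θ T C₀ lam C₁ α C₄ : ℝ)
    (hA : 0 < A) (hAbar1 : A / 2 < Abar) (hAbar2 : Abar < A) (hθ : 2 < θ) (hT : 0 < T)
    (hC₀ : 0 < C₀) (hlam : 0 < lam) (hC₁ : 0 < C₁) (hα : 5 / 9 < α) (hC₄ : 1 ≤ C₄)
    (f₀ : E3 → E3 → ℝ) (hf₀meas : Measurable (Function.uncurry f₀))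
    (hf₀nn : ∀ x v, 0 ≤ f₀ x v)
    (hf₀supp : ∀ x v, x ∉ cyl Abar → f₀ x v = 0)
    (hf₀gauss : ∀ x v, f₀ x v ≤ C₀ * Real.exp (-lam * ‖v‖ ^ 2))
    (φ : ℝ → ℝ) (hφsmooth : ContDiff ℝ (⊤ : ℕ∞) φ)
    (hφone : ∀ a ∈ Icc (0:ℝ) 1, φ a = 1) (hφzero : ∀ a : ℝ, 2 ≤ a → φ a = 0)
    (hφrange : ∀ a : ℝ, 0 ≤ φ a ∧ φ a ≤ 1)
    (hφderiv : ∀ a : ℝ, -2 ≤ deriv φ a ∧ deriv φ a ≤ 0)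
    (η ξ C₇ : ℝ) (hη : 0 < η) (hξ : 0 < ξ) (hC₇ : 0 < C₇)
    (N : ℕ) (P : PD A Abar θ T f₀ N)
    (VV QQ Δ₁ : ℝ)
    (hVV : VV = maxV P C₄ T)
    (hVV1 : 1 ≤ VV)
    (hQQ : QQ = ⨆ s : Icc (0:ℝ) T, Qloc P φ (Rdisp P C₄ (s:ℝ)) (s:ℝ))
    (hΔ : Δ₁ = 1 / (4 * C₇ * VV ^ ((4:ℝ)/3 + η) * QQ ^ ((1:ℝ)/3)))
    (hE : ∀ z : E3, ∀ s ∈ Icc (0:ℝ) T, ‖P.EE z s‖ ≤ C₇ * VV ^ ((4:ℝ)/3) * QQ ^ ((1:ℝ)/3))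
    (x v : E3) (hx : x ∈ cyl Abar) (hv : ‖v‖ < N)
    (t : ℝ) (ht : t ∈ Icc (0:ℝ) T) (ht' : t + Δ₁ ≤ T) :
    (Real.sqrt ((P.V x v t 1) ^ 2 + (P.V x v t 2) ^ 2) ≤ VV ^ ξ →
      ∀ s ∈ Icc t (t + Δ₁),
        Real.sqrt ((P.V x v s 1) ^ 2 + (P.V x v s 2) ^ 2) ≤ 2 * VV ^ ξ) ∧
    (VV ^ ξ ≤ Real.sqrt ((P.V x v t 1) ^ 2 + (P.V x v t 2) ^ 2) →
      ∀ s ∈ Icc t (t + Δ₁),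
        (1/2) * VV ^ ξ ≤ Real.sqrt ((P.V x v s 1) ^ 2 + (P.V x v s 2) ^ 2)) := by
  have hVpos : (0:ℝ) < VV := lt_of_lt_of_le one_pos hVV1
  have hQQ0 : (0:ℝ) ≤ QQ := by
    rw [hQQ]
    exact Real.iSup_nonneg fun s => le_trans zero_le_one (le_max_left _ _)
  set C : ℝ := C₇ * VV ^ ((4:ℝ)/3) * QQ ^ ((1:ℝ)/3) with hCdef
  have hC0 : 0 ≤ C := by positivity
  have hsub : Icc t (t + Δ₁) ⊆ Icc (0:ℝ) T := fun u hu => ⟨le_trans ht.1 hu.1, le_trans hu.2 ht'⟩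
  have hd1 : ∀ s ∈ Icc t (t + Δ₁), HasDerivAt (fun s => P.V x v s 1)
      (P.EE (P.X x v s) s 1 + P.V x v s 2 *
        (A ^ 2 - (P.X x v s 1 ^ 2 + P.X x v s 2 ^ 2)) ^ (-θ)) s := by
    intro s hsI
    have hD := P.ode_V x v hx hv s (hsub hsI)
    have h1 := (EuclideanSpace.proj (1 : Fin 3)).hasFDerivAt.comp_hasDerivAt s hD
    simp only [Function.comp_def, PiLp.proj_apply, PiLp.toLp_apply, PiLp.add_apply, cross3, Bf,
      Matrix.cons_val_one, Matrix.head_cons, Matrix.cons_val_zero, Matrix.cons_val_two,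
      Matrix.tail_cons, mul_zero, sub_zero, zero_mul, zero_sub] at h1
    exact h1
  have hd2 : ∀ s ∈ Icc t (t + Δ₁), HasDerivAt (fun s => P.V x v s 2)
      (P.EE (P.X x v s) s 2 - P.V x v s 1 *
        (A ^ 2 - (P.X x v s 1 ^ 2 + P.X x v s 2 ^ 2)) ^ (-θ)) s := by
    intro s hsI
    have hD := P.ode_V x v hx hv s (hsub hsI)
    have h1 := (EuclideanSpace.proj (2 : Fin 3)).hasFDerivAt.comp_hasDerivAt s hD
    simp only [Function.comp_def, PiLp.proj_apply, PiLp.toLp_apply, PiLp.add_apply, cross3, Bf,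
      Matrix.cons_val_one, Matrix.head_cons, Matrix.cons_val_zero, Matrix.cons_val_two,
      Matrix.tail_cons, mul_zero, sub_zero, zero_mul, zero_sub] at h1
    simpa only [sub_eq_add_neg] using h1
  have hEb : ∀ s ∈ Icc t (t + Δ₁),
      Real.sqrt (P.EE (P.X x v s) s 1 ^ 2 + P.EE (P.X x v s) s 2 ^ 2) ≤ C := by
    intro s hsI
    have hb := hE (P.X x v s) s (hsub hsI)
    refine le_trans ?_ hb
    rw [EuclideanSpace.norm_eq]
    apply Real.sqrt_le_sqrt
    rw [Fin.sum_univ_three]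
    simp only [Real.norm_eq_abs, sq_abs]
    nlinarith [sq_nonneg (P.EE (P.X x v s) s 0)]
  have hkey := aux_perp t Δ₁ C hC0 (fun s => P.V x v s 1) (fun s => P.V x v s 2)
    (fun s => P.EE (P.X x v s) s 1) (fun s => P.EE (P.X x v s) s 2)
    (fun s => (A ^ 2 - (P.X x v s 1 ^ 2 + P.X x v s 2 ^ 2)) ^ (-θ)) hd1 hd2 hEb
  simp only [] at hkey
  have hCΔ : C * Δ₁ ≤ 1/4 := by
    rcases eq_or_lt_of_le hQQ0 with hq | hq
    · rw [hΔ, ← hq, Real.zero_rpow (by norm_num : (1:ℝ)/3 ≠ 0)]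
      simp [hCdef, ← hq, Real.zero_rpow (by norm_num : (1:ℝ)/3 ≠ 0)]
    · have hQp : 0 < QQ ^ ((1:ℝ)/3) := Real.rpow_pos_of_pos hq _
      have hVp : 0 < VV ^ ((4:ℝ)/3) := Real.rpow_pos_of_pos hVpos _
      have hVe : 1 ≤ VV ^ η := Real.one_le_rpow hVV1 hη.le
      have hsplit : VV ^ ((4:ℝ)/3 + η) = VV ^ ((4:ℝ)/3) * VV ^ η := Real.rpow_add hVpos _ _
      rw [hΔ, hsplit, hCdef, mul_one_div,
        div_le_div_iff₀ (by positivity) (by norm_num : (0:ℝ) < 4)]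
      have base : 0 ≤ C₇ * VV ^ ((4:ℝ)/3) * QQ ^ ((1:ℝ)/3) := by positivity
      nlinarith [mul_le_mul_of_nonneg_left hVe base]
  have hVξ : 1 ≤ VV ^ ξ := Real.one_le_rpow hVV1 hξ.le
  constructor
  · intro hle s hsI
    have habs := abs_le.1 (le_trans (hkey s hsI) hCΔ)
    linarith [habs.1, habs.2]
  · intro hge s hsI
    have habs := abs_le.1 (le_trans (hkey s hsI) hCΔ)
    linarith [habs.1, habs.2]
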